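/- Define σ(φ₀, Δθ) = arccos(sin²φ₀ + cos²φ₀ · cos Δθ). Then σ(φ₀, Δθ) = cos φ₀ · |Δθ| + O(|Δθ|³) as Δθ → 0; equivalently, (σ(φ₀, Δθ) - cos φ₀ · |Δθ|)/|Δθ|³ is bounded in a punctured neighborhood of 0. -/

import Mathlib

/-!
By the half-angle formula, `sin² φ₀ + cos² φ₀ cos Δθ = 1 - 2 (cos φ₀ sin (|Δθ|/2))²`, so
`σ = 2 arcsin (cos φ₀ sin (|Δθ|/2))`. Since `x ≤ arcsin x ≤ x + x³` on `[0, 1/2]` and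
`sin (t/2) = t/2 + O(t³)`, this is `cos φ₀ |Δθ| + O(|Δθ|³)`.
-/

open Real

namespace Real

theorem sin_sq_add_cos_sq_mul_cos (φ θ : ℝ) :
    sin φ ^ 2 + cos φ ^ 2 * cos θ = 1 - 2 * (cos φ * sin (θ / 2)) ^ 2 := by
  have hθ : cos θ = 1 - 2 * sin (θ / 2) ^ 2 := by
    rw [← cos_two_mul_eq_one_sub, mul_div_cancel₀ θ two_ne_zero]
  rw [hθ]
  linear_combination sin_sq_add_cos_sq φ

theorem arccos_one_sub_two_mul_sq {x : ℝ} (hx₀ : 0 ≤ x) (hx₁ : x ≤ 1) :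
    arccos (1 - 2 * x ^ 2) = 2 * arcsin x := by
  have h₀ : 0 ≤ 2 * arcsin x := by linarith [arcsin_nonneg.mpr hx₀]
  have h₁ : 2 * arcsin x ≤ π := by linarith [arcsin_le_pi_div_two x]
  rw [← arccos_cos h₀ h₁, cos_two_mul_eq_one_sub, sin_arcsin (by linarith) hx₁]

theorem self_le_arcsin {x : ℝ} (hx₀ : 0 ≤ x) (hx₁ : x ≤ 1) : x ≤ arcsin x := by
  simpa only [sin_arcsin (by linarith) hx₁] using sin_le (arcsin_nonneg.mpr hx₀)

theorem arcsin_le_self_add_cube {x : ℝ} (hx₀ : 0 ≤ x) (hx : x ≤ 1 / 2) :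
    arcsin x ≤ x + x ^ 3 := by
  have hcube : x ^ 3 ≤ x / 4 := by nlinarith [mul_nonneg hx₀ hx₀]
  have hy : (x + x ^ 3) ^ 3 ≤ 6 * x ^ 3 := by
    have := pow_le_pow_left₀ (by positivity) (show x + x ^ 3 ≤ 5 / 4 * x by linarith) 3
    nlinarith [pow_nonneg hx₀ 3]
  rw [arcsin_le_iff_le_sin ⟨by linarith, by linarith⟩ ⟨by linarith [pow_nonneg hx₀ 3, pi_pos],
    by linarith [pi_gt_three]⟩]
  rcases hx₀.eq_or_lt with rfl | hpos
  · simp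
  · linarith [sin_gt_sub_cube (show 0 < x + x ^ 3 by positivity)]

theorem abs_two_mul_arcsin_mul_sin_half_sub_le {c t : ℝ} (hc₀ : 0 ≤ c) (hc₁ : c ≤ 1)
    (ht₀ : 0 ≤ t) (ht₁ : t ≤ 1) :
    |2 * arcsin (c * sin (t / 2)) - c * t| ≤ t ^ 3 / 4 := by
  have hs₀ : 0 ≤ sin (t / 2) := sin_nonneg_of_nonneg_of_le_pi (by linarith) (by linarith [pi_gt_three])
  have hs₁ : sin (t / 2) ≤ t / 2 := sin_le (by linarith)
  have hs₂ : t / 2 - sin (t / 2) ≤ (t / 2) ^ 3 / 6 := by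
    have := abs_sub_sin_le (t / 2)
    rw [abs_of_nonneg (by linarith : 0 ≤ t / 2)] at this
    exact (le_abs_self _).trans this
  set x := c * sin (t / 2)
  have hx₀ : 0 ≤ x := mul_nonneg hc₀ hs₀
  have hx : x ≤ t / 2 := by nlinarith
  have hlow := self_le_arcsin hx₀ (by linarith)
  have hup := arcsin_le_self_add_cube hx₀ (by linarith)
  have hx3 : x ^ 3 ≤ (t / 2) ^ 3 := pow_le_pow_left₀ hx₀ hx 3
  rw [abs_le]
  constructor <;> nlinarith [pow_nonneg ht₀ 3]

end Real

open Real in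
theorem sigma_local_expansion (φ₀ : ℝ) (hφ : φ₀ ∈ Set.Icc 0 (π / 2)) :
    ∃ C ε : ℝ, 0 < C ∧ 0 < ε ∧ ∀ Δθ : ℝ, Δθ ≠ 0 → |Δθ| ≤ ε →
      abs (arccos (sin φ₀ ^ 2 + cos φ₀ ^ 2 * cos Δθ) - cos φ₀ * |Δθ|) ≤ C * |Δθ| ^ 3 := by
  refine ⟨1 / 4, 1, by norm_num, one_pos, fun Δθ _ hΔθ => ?_⟩
  have hc₀ : 0 ≤ cos φ₀ := cos_nonneg_of_mem_Icc ⟨by linarith [hφ.1, pi_pos], hφ.2⟩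
  have hs₀ : 0 ≤ sin (|Δθ| / 2) :=
    sin_nonneg_of_nonneg_of_le_pi (by positivity) (by linarith [pi_gt_three])
  have hx₀ : 0 ≤ cos φ₀ * sin (|Δθ| / 2) := mul_nonneg hc₀ hs₀
  have hx₁ : cos φ₀ * sin (|Δθ| / 2) ≤ 1 := mul_le_one₀ (cos_le_one _) hs₀ (sin_le_one _)
  rw [← cos_abs Δθ, sin_sq_add_cos_sq_mul_cos, arccos_one_sub_two_mul_sq hx₀ hx₁]
  linarith [abs_two_mul_arcsin_mul_sin_half_sub_le hc₀ (cos_le_one φ₀) (abs_nonneg Δθ) hΔθ]
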